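/- Let P be a polygonal curve of complexity at most k in ℝ^d, let λ ≥ 0, Δ ≥ 0 and p ∈ ℝ^d. Then there exist k points p₁*,…,p_k* ∈ ℝ^d such that 𝓛_{λ,Δ}(P,p) is contained in the union of the closed balls of radius 5Δ centered at p₁*,…,p_k*. -/
import Mathlib


open Set Metric Function

noncomputable section

/-- Euclidean space ℝ^d. -/
abbrev Euc (d : ℕ) := EuclideanSpace ℝ (Fin d)

/-- The polygonal curve (parametrized over `[0,1]`) obtained by concatenating the
segments between consecutive vertices `p 0, p 1, …, p n`. -/
def curveMap {d n : ℕ} (p : Fin (n + 1) → Euc d) (t : ℝ) : Euc d :=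
  if h : n = 0 then p 0
  else
    (1 - (t * n - (min ⌊t * (n : ℝ)⌋₊ (n - 1) : ℕ))) • p ⟨min ⌊t * (n : ℝ)⌋₊ (n - 1), by omega⟩
      + (t * n - (min ⌊t * (n : ℝ)⌋₊ (n - 1) : ℕ)) • p ⟨min ⌊t * (n : ℝ)⌋₊ (n - 1) + 1, by omega⟩

/-- A reparametrization: a continuous non-decreasing surjection of `[0,1]` onto itself. -/
def IsRepar (f : ℝ → ℝ) : Prop :=
  ContinuousOn f (Icc 0 1) ∧ MonotoneOn f (Icc 0 1) ∧ f '' Icc 0 1 = Icc 0 1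

/-- The (continuous) Fréchet distance between two curves `[0,1] → ℝ^d`. -/
def frechetDist {d : ℕ} (P Q : ℝ → Euc d) : ℝ :=
  sInf { r : ℝ | ∃ f g : ℝ → ℝ, IsRepar f ∧ IsRepar g ∧
    ∀ t ∈ Icc (0 : ℝ) 1, dist (P (f t)) (Q (g t)) ≤ r }

/-- The edge (segment curve) from `a` to `b`, parametrized over `[0,1]`. -/
def seg {d : ℕ} (a b : Euc d) (t : ℝ) : Euc d := (1 - t) • a + t • b

/-- The subcurve `P[s,t]` of `P`, reparametrized over `[0,1]`. -/
def subcurve {d : ℕ} (P : ℝ → Euc d) (s t : ℝ) (u : ℝ) : Euc d := P (s + u * (t - s))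

/-- All edge lengths of the polygonal curve with vertices `p` are at most `Λ`. -/
def EdgeLenLe {d n : ℕ} (p : Fin (n + 1) → Euc d) (Λ : ℝ) : Prop :=
  ∀ i : Fin n, dist (p i.castSucc) (p i.succ) ≤ Λ

/-- The vertices `p` define a `(μ,ε)`-curve: each edge length is a non-negative integer
multiple of `ε` and is at most `μ·ε`. -/
def IsMuEpsEdges {d n : ℕ} (p : Fin (n + 1) → Euc d) (μ : ℕ) (ε : ℝ) : Prop :=
  ∀ i : Fin n, (∃ m : ℕ, dist (p i.castSucc) (p i.succ) = m * ε) ∧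
    dist (p i.castSucc) (p i.succ) ≤ μ * ε

/-- The `Δ`-neighbourhood of a set `A ⊆ ℝ^d`. -/
def nbhd {d : ℕ} (A : Set (Euc d)) (Δ : ℝ) : Set (Euc d) :=
  { x | ∃ a ∈ A, dist x a ≤ Δ }

/-- The locus `L_{λ,Δ}(P,s)` of endpoints of edges of length `λ` that are within Fréchet
distance `Δ` of some subcurve of `P` starting at parameter `s`. -/
def locusStart {d n : ℕ} (P : Fin (n + 1) → Euc d) (lam Δ s : ℝ) : Set (Euc d) :=
  { q | ∃ p : Euc d, ∃ t ∈ Icc s 1, dist p q = lam ∧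
      frechetDist (subcurve (curveMap P) s t) (seg p q) ≤ Δ }

/-- The locus `𝓛_{λ,Δ}(P,p)` of endpoints of edges of length `λ` starting at `p` that are
within Fréchet distance `Δ` of some subcurve of `P`. -/
def locusPoint {d n : ℕ} (P : Fin (n + 1) → Euc d) (lam Δ : ℝ) (p : Euc d) : Set (Euc d) :=
  { q | dist p q = lam ∧ ∃ s t : ℝ, 0 ≤ s ∧ s ≤ t ∧ t ≤ 1 ∧
      frechetDist (subcurve (curveMap P) s t) (seg p q) ≤ Δ }


section Aux

variable {d n : ℕ}

lemma seg_zero (p q : Euc d) : seg p q 0 = p := by simp [seg]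

lemma seg_one (p q : Euc d) : seg p q 1 = q := by simp [seg]

lemma seg_dist_left (p q : Euc d) {τ : ℝ} (h : 0 ≤ τ) :
    dist p (seg p q τ) = τ * dist p q := by
  rw [dist_eq_norm, dist_eq_norm]
  have h1 : p - seg p q τ = τ • (p - q) := by unfold seg; module
  rw [h1, norm_smul, Real.norm_eq_abs, abs_of_nonneg h]

lemma seg_dist_right (p q : Euc d) {τ : ℝ} (h : τ ≤ 1) :
    dist (seg p q τ) q = (1 - τ) * dist p q := by
  rw [dist_eq_norm, dist_eq_norm]
  have h1 : seg p q τ - q = (1 - τ) • (p - q) := by unfold seg; module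
  rw [h1, norm_smul, Real.norm_eq_abs, abs_of_nonneg (by linarith)]

lemma dist_convex (p x y : Euc d) {θ : ℝ} (h0 : 0 ≤ θ) (h1 : θ ≤ 1) :
    dist p ((1 - θ) • x + θ • y) ≤ (1 - θ) * dist p x + θ * dist p y := by
  rw [dist_eq_norm, dist_eq_norm, dist_eq_norm]
  calc ‖p - ((1 - θ) • x + θ • y)‖ = ‖(1 - θ) • (p - x) + θ • (p - y)‖ := by
        congr 1; module
    _ ≤ ‖(1 - θ) • (p - x)‖ + ‖θ • (p - y)‖ := norm_add_le _ _
    _ = (1 - θ) * ‖p - x‖ + θ * ‖p - y‖ := by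
        rw [norm_smul, norm_smul, Real.norm_eq_abs, Real.norm_eq_abs,
          abs_of_nonneg (by linarith), abs_of_nonneg h0]

lemma curveMap_edge (P : Fin (n + 1) → Euc d) (hn : n ≠ 0) {x : ℝ} {j : ℕ}
    (hj : min ⌊x * (n : ℝ)⌋₊ (n - 1) = j) :
    curveMap P x = (1 - (x * n - j)) • P ⟨j, by omega⟩ + (x * n - j) • P ⟨j + 1, by
      have h := min_le_right ⌊x * (n : ℝ)⌋₊ (n - 1); omega⟩ := by
  unfold curveMap
  rw [dif_neg hn]
  simp only [hj]

end Aux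

section Aux2

variable {d n : ℕ}

lemma edge_mono {u v : ℝ} (h : u ≤ v) :
    min ⌊u * (n : ℝ)⌋₊ (n - 1) ≤ min ⌊v * (n : ℝ)⌋₊ (n - 1) := by
  have : ⌊u * (n : ℝ)⌋₊ ≤ ⌊v * (n : ℝ)⌋₊ :=
    Nat.floor_mono (mul_le_mul_of_nonneg_right h (Nat.cast_nonneg n))
  omega

lemma conv_lemma (P : Fin (n + 1) → Euc d) (p : Euc d) (hn : n ≠ 0)
    {Δ u v w : ℝ} {j : ℕ}
    (huv : u ≤ v) (hvw : v ≤ w)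
    (hju : min ⌊u * (n : ℝ)⌋₊ (n - 1) = j) (hjw : min ⌊w * (n : ℝ)⌋₊ (n - 1) = j)
    (hu : dist p (curveMap P u) ≤ Δ) (hw : dist p (curveMap P w) ≤ Δ) :
    dist p (curveMap P v) ≤ Δ := by
  have hjv : min ⌊v * (n : ℝ)⌋₊ (n - 1) = j := by
    have h1 := edge_mono (n := n) huv
    have h2 := edge_mono (n := n) hvw
    omega
  rcases eq_or_lt_of_le (huv.trans hvw) with heq | hlt
  · have : v = u := le_antisymm (heq ▸ hvw) huv
    rw [this]; exact hu
  · set θ : ℝ := (v - u) / (w - u) with hθdef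
    have hwu : (0:ℝ) < w - u := by linarith
    have hθ0 : 0 ≤ θ := div_nonneg (by linarith) hwu.le
    have hθ1 : θ ≤ 1 := by
      rw [div_le_one hwu]; linarith
    have hθmul : θ * (w - u) = v - u := div_mul_cancel₀ _ (ne_of_gt hwu)
    have hv : v * n - (j:ℝ) = (1 - θ) * (u * n - j) + θ * (w * n - j) := by
      have : (1 - θ) * (u * n - (j:ℝ)) + θ * (w * n - j) - (v * n - j)
          = (θ * (w - u) - (v - u)) * n := by ring
      have h2 : (θ * (w - u) - (v - u)) * (n:ℝ) = 0 := by rw [hθmul]; ring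
      linarith [this, h2]
    have key : curveMap P v = (1 - θ) • curveMap P u + θ • curveMap P w := by
      rw [curveMap_edge P hn hju, curveMap_edge P hn hjw, curveMap_edge P hn hjv, hv]
      module
    rw [key]
    calc dist p ((1 - θ) • curveMap P u + θ • curveMap P w)
        ≤ (1 - θ) * dist p (curveMap P u) + θ * dist p (curveMap P w) :=
          dist_convex _ _ _ hθ0 hθ1
      _ ≤ (1 - θ) * Δ + θ * Δ := add_le_add
          (mul_le_mul_of_nonneg_left hu (by linarith))
          (mul_le_mul_of_nonneg_left hw hθ0)
      _ = Δ := by ring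

end Aux2

section Aux3

variable {d n : ℕ}

lemma isRepar_id : IsRepar id :=
  ⟨continuousOn_id, monotone_id.monotoneOn _, image_id _⟩

lemma curveMap_norm_le (P : Fin (n + 1) → Euc d) {u : ℝ} (h0 : 0 ≤ u) (h1 : u ≤ 1) :
    ‖curveMap P u‖ ≤ Finset.univ.sup' Finset.univ_nonempty (fun i => ‖P i‖) := by
  set B := Finset.univ.sup' Finset.univ_nonempty (fun i => ‖P i‖) with hB
  have hBi : ∀ i, ‖P i‖ ≤ B := fun i => hB ▸ Finset.le_sup' (fun i => ‖P i‖) (Finset.mem_univ i)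
  unfold curveMap
  split_ifs with h
  · exact hBi _
  · set c : ℝ := u * n - (min ⌊u * (n : ℝ)⌋₊ (n - 1) : ℕ) with hc
    have hc0 : 0 ≤ c := by
      have h1' : ((min ⌊u * (n : ℝ)⌋₊ (n - 1) : ℕ) : ℝ) ≤ (⌊u * (n : ℝ)⌋₊ : ℝ) := by
        exact_mod_cast min_le_left _ _
      have h2' : (⌊u * (n : ℝ)⌋₊ : ℝ) ≤ u * n := Nat.floor_le (by positivity)
      rw [hc]; linarith
    have hc1 : c ≤ 1 := by
      rcases le_or_gt ⌊u * (n : ℝ)⌋₊ (n - 1) with hle | hgt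
      · have hm : min ⌊u * (n : ℝ)⌋₊ (n - 1) = ⌊u * (n : ℝ)⌋₊ := min_eq_left hle
        rw [hc, hm]
        have := Nat.lt_floor_add_one (u * (n : ℝ))
        linarith
      · have hm : min ⌊u * (n : ℝ)⌋₊ (n - 1) = n - 1 := min_eq_right hgt.le
        rw [hc, hm]
        have hun : u * (n : ℝ) ≤ n := mul_le_of_le_one_left (Nat.cast_nonneg n) h1
        have hcast : ((n - 1 : ℕ) : ℝ) = (n : ℝ) - 1 := by
          have h1n : 1 ≤ n := Nat.one_le_iff_ne_zero.mpr h
          push_cast [h1n]; ring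
        rw [hcast]; linarith
    calc ‖(1 - c) • P _ + c • P _‖ ≤ ‖(1 - c) • P _‖ + ‖c • P _‖ := norm_add_le _ _
      _ = (1 - c) * ‖P _‖ + c * ‖P _‖ := by
          rw [norm_smul, norm_smul, Real.norm_eq_abs, Real.norm_eq_abs,
            abs_of_nonneg (by linarith), abs_of_nonneg hc0]
      _ ≤ (1 - c) * B + c * B := add_le_add
          (mul_le_mul_of_nonneg_left (hBi _) (by linarith))
          (mul_le_mul_of_nonneg_left (hBi _) hc0)
      _ = B := by ring

lemma seg_norm_le (p q : Euc d) {τ : ℝ} (h0 : 0 ≤ τ) (h1 : τ ≤ 1) :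
    ‖seg p q τ‖ ≤ ‖p‖ + ‖q‖ := by
  unfold seg
  calc ‖(1 - τ) • p + τ • q‖ ≤ ‖(1 - τ) • p‖ + ‖τ • q‖ := norm_add_le _ _
    _ = (1 - τ) * ‖p‖ + τ * ‖q‖ := by
        rw [norm_smul, norm_smul, Real.norm_eq_abs, Real.norm_eq_abs,
          abs_of_nonneg (by linarith), abs_of_nonneg h0]
    _ ≤ ‖p‖ + ‖q‖ := by nlinarith [norm_nonneg p, norm_nonneg q]

end Aux3

section Aux4

variable {d n : ℕ}

lemma frechet_extract (P : Fin (n + 1) → Euc d) (p q : Euc d) {Δ s t : ℝ}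
    (hs : 0 ≤ s) (hst : s ≤ t) (ht : t ≤ 1)
    (hF : frechetDist (subcurve (curveMap P) s t) (seg p q) ≤ Δ) :
    dist p (curveMap P s) ≤ Δ ∧ dist (curveMap P t) q ≤ Δ ∧
      ∀ u, s ≤ u → u ≤ t → ∃ τ, 0 ≤ τ ∧ τ ≤ 1 ∧ dist (curveMap P u) (seg p q τ) ≤ Δ := by
  unfold frechetDist at hF
  set S := { r : ℝ | ∃ f g : ℝ → ℝ, IsRepar f ∧ IsRepar g ∧
    ∀ t0 ∈ Icc (0 : ℝ) 1, dist (subcurve (curveMap P) s t (f t0)) (seg p q (g t0)) ≤ r }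
    with hSdef
  have harg : ∀ x ∈ Icc (0:ℝ) 1, 0 ≤ s + x * (t - s) ∧ s + x * (t - s) ≤ 1 := by
    intro x hx
    constructor
    · exact add_nonneg hs (mul_nonneg hx.1 (by linarith))
    · have : x * (t - s) ≤ t - s := mul_le_of_le_one_left (by linarith) hx.2
      linarith
  have hne : S.Nonempty := by
    refine ⟨Finset.univ.sup' Finset.univ_nonempty (fun i => ‖P i‖) + (‖p‖ + ‖q‖),
      id, id, isRepar_id, isRepar_id, fun t0 ht0 => ?_⟩
    have h1 := harg t0 ht0
    calc dist (subcurve (curveMap P) s t (id t0)) (seg p q (id t0))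
        ≤ ‖curveMap P (s + t0 * (t - s))‖ + ‖seg p q t0‖ := by
          rw [dist_eq_norm]; exact norm_sub_le _ _
      _ ≤ _ := add_le_add (curveMap_norm_le P h1.1 h1.2) (seg_norm_le p q ht0.1 ht0.2)
  have hbdd : BddBelow S := by
    refine ⟨0, fun r hr => ?_⟩
    obtain ⟨f, g, hf, hg, hfg⟩ := hr
    exact dist_nonneg.trans (hfg 0 ⟨le_refl 0, zero_le_one⟩)
  have key : ∀ ε : ℝ, 0 < ε → ∃ r ∈ S, r < Δ + ε := by
    intro ε hε
    have : sInf S < Δ + ε := lt_of_le_of_lt hF (by linarith)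
    exact (csInf_lt_iff hbdd hne).mp this
  -- from a member r : start/end matching
  have hstart : ∀ r ∈ S, dist p (curveMap P s) ≤ r := by
    intro r hr
    obtain ⟨f, g, hf, hg, hfg⟩ := hr
    have h0 : (0:ℝ) ∈ Icc (0:ℝ) 1 := ⟨le_refl _, zero_le_one⟩
    have h0f : (0:ℝ) ∈ f '' Icc 0 1 := by rw [hf.2.2]; exact h0
    have h0g : (0:ℝ) ∈ g '' Icc 0 1 := by rw [hg.2.2]; exact h0
    obtain ⟨a, ha, hfa⟩ := h0f
    obtain ⟨b, hb, hgb⟩ := h0g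
    have hab : min a b ∈ Icc (0:ℝ) 1 := ⟨le_min ha.1 hb.1, (min_le_left a b).trans ha.2⟩
    have hfab : f (min a b) = 0 := by
      have hmem : f (min a b) ∈ Icc (0:ℝ) 1 := by
        rw [← hf.2.2]; exact mem_image_of_mem f hab
      have : f (min a b) ≤ f a := hf.2.1 hab ha (min_le_left a b)
      exact le_antisymm (hfa ▸ this) hmem.1
    have hgab : g (min a b) = 0 := by
      have hmem : g (min a b) ∈ Icc (0:ℝ) 1 := by
        rw [← hg.2.2]; exact mem_image_of_mem g hab
      have : g (min a b) ≤ g b := hg.2.1 hab hb (min_le_right a b)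
      exact le_antisymm (hgb ▸ this) hmem.1
    have := hfg (min a b) hab
    rw [hfab, hgab] at this
    have hsc : subcurve (curveMap P) s t 0 = curveMap P s := by
      unfold subcurve; norm_num
    rw [hsc, seg_zero] at this
    rwa [dist_comm]
  have hend : ∀ r ∈ S, dist (curveMap P t) q ≤ r := by
    intro r hr
    obtain ⟨f, g, hf, hg, hfg⟩ := hr
    have h0 : (1:ℝ) ∈ Icc (0:ℝ) 1 := ⟨zero_le_one, le_refl _⟩
    have h0f : (1:ℝ) ∈ f '' Icc 0 1 := by rw [hf.2.2]; exact h0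
    have h0g : (1:ℝ) ∈ g '' Icc 0 1 := by rw [hg.2.2]; exact h0
    obtain ⟨a, ha, hfa⟩ := h0f
    obtain ⟨b, hb, hgb⟩ := h0g
    have hab : max a b ∈ Icc (0:ℝ) 1 := ⟨ha.1.trans (le_max_left a b), max_le ha.2 hb.2⟩
    have hfab : f (max a b) = 1 := by
      have hmem : f (max a b) ∈ Icc (0:ℝ) 1 := by
        rw [← hf.2.2]; exact mem_image_of_mem f hab
      have : f a ≤ f (max a b) := hf.2.1 ha hab (le_max_left a b)
      exact le_antisymm hmem.2 (hfa ▸ this)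
    have hgab : g (max a b) = 1 := by
      have hmem : g (max a b) ∈ Icc (0:ℝ) 1 := by
        rw [← hg.2.2]; exact mem_image_of_mem g hab
      have : g b ≤ g (max a b) := hg.2.1 hb hab (le_max_right a b)
      exact le_antisymm hmem.2 (hgb ▸ this)
    have := hfg (max a b) hab
    rw [hfab, hgab] at this
    have hsc : subcurve (curveMap P) s t 1 = curveMap P t := by
      unfold subcurve; norm_num
    rwa [hsc, seg_one] at this
  have hmid : ∀ u, s ≤ u → u ≤ t → ∀ r ∈ S,
      ∃ τ, 0 ≤ τ ∧ τ ≤ 1 ∧ dist (curveMap P u) (seg p q τ) ≤ r := by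
    intro u hsu hut r hr
    obtain ⟨f, g, hf, hg, hfg⟩ := hr
    rcases eq_or_lt_of_le hst with heq | hlt
    · have huu : u = s := le_antisymm (heq ▸ hut) hsu
      have h0 : (0:ℝ) ∈ Icc (0:ℝ) 1 := ⟨le_refl _, zero_le_one⟩
      have hg0 : g 0 ∈ Icc (0:ℝ) 1 := by rw [← hg.2.2]; exact mem_image_of_mem g h0
      refine ⟨g 0, hg0.1, hg0.2, ?_⟩
      have := hfg 0 h0
      have hsc : subcurve (curveMap P) s t (f 0) = curveMap P u := by
        unfold subcurve; rw [huu, ← heq]; ring_nf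
      rwa [hsc] at this
    · set v : ℝ := (u - s) / (t - s) with hv
      have hts : (0:ℝ) < t - s := by linarith
      have hv0 : 0 ≤ v := div_nonneg (by linarith) hts.le
      have hv1 : v ≤ 1 := by rw [hv, div_le_one hts]; linarith
      have hvf : v ∈ f '' Icc 0 1 := by rw [hf.2.2]; exact ⟨hv0, hv1⟩
      obtain ⟨a, ha, hfa⟩ := hvf
      have hga : g a ∈ Icc (0:ℝ) 1 := by rw [← hg.2.2]; exact mem_image_of_mem g ha
      refine ⟨g a, hga.1, hga.2, ?_⟩
      have := hfg a ha
      have hsc : subcurve (curveMap P) s t (f a) = curveMap P u := by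
        unfold subcurve
        rw [hfa, hv, div_mul_cancel₀ _ (ne_of_gt hts)]
        ring_nf
      rwa [hsc] at this
  refine ⟨le_of_forall_pos_le_add fun ε hε => ?_,
    le_of_forall_pos_le_add fun ε hε => ?_, fun u hsu hut => ?_⟩
  · obtain ⟨r, hrS, hrlt⟩ := key ε hε
    exact (hstart r hrS).trans hrlt.le
  · obtain ⟨r, hrS, hrlt⟩ := key ε hε
    exact (hend r hrS).trans hrlt.le
  · have hcont : Continuous fun τ : ℝ => dist (curveMap P u) (seg p q τ) := by
      apply Continuous.dist continuous_const
      unfold seg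
      exact ((continuous_const.sub continuous_id).smul continuous_const).add
        (continuous_id.smul continuous_const)
    obtain ⟨τ0, hτ0, hminn⟩ := isCompact_Icc.exists_isMinOn
      (⟨0, le_refl (0:ℝ), zero_le_one⟩ : (Icc (0:ℝ) 1).Nonempty) hcont.continuousOn
    refine ⟨τ0, hτ0.1, hτ0.2, le_of_forall_pos_le_add fun ε hε => ?_⟩
    obtain ⟨r, hrS, hrlt⟩ := key ε hε
    obtain ⟨τ, hτa, hτb, hτd⟩ := hmid u hsu hut r hrS
    exact (hminn ⟨hτa, hτb⟩).trans (hτd.trans hrlt.le)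
end Aux4

/-- `good P p Δ t j` : some parameter `u ≤ t` lying on edge `j` is `Δ`-close to `p`. -/
def good {d n : ℕ} (P : Fin (n + 1) → Euc d) (p : Euc d) (Δ t : ℝ) (j : ℕ) : Prop :=
  ∃ u, 0 ≤ u ∧ u ≤ t ∧ min ⌊u * (n : ℝ)⌋₊ (n - 1) = j ∧ dist p (curveMap P u) ≤ Δ

section Aux5

variable {d n : ℕ}

lemma pair_lemma (P : Fin (n + 1) → Euc d) (p : Euc d) (hn : n ≠ 0)
    {lam Δ : ℝ} (hlam : 2 * Δ < lam)
    {q1 q2 : Euc d} {s1 t1 s2 t2 : ℝ}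
    (hd1 : dist p q1 = lam) (hd2 : dist p q2 = lam)
    (hs1 : 0 ≤ s1) (hst1 : s1 ≤ t1) (ht1 : t1 ≤ 1)
    (hs2 : 0 ≤ s2) (hst2 : s2 ≤ t2) (ht2 : t2 ≤ 1)
    (hF1 : frechetDist (subcurve (curveMap P) s1 t1) (seg p q1) ≤ Δ)
    (hF2 : frechetDist (subcurve (curveMap P) s2 t2) (seg p q2) ≤ Δ)
    (ht12 : t1 ≤ t2) {j : ℕ}
    (hgood1 : good P p Δ t1 j)
    (hmax2 : ∀ j', j' ≤ n - 1 → good P p Δ t2 j' → j' ≤ j) :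
    dist q1 q2 ≤ 4 * Δ := by
  obtain ⟨E1s, E1t, _⟩ := frechet_extract P p q1 hs1 hst1 ht1 hF1
  obtain ⟨E2s, E2t, E2m⟩ := frechet_extract P p q2 hs2 hst2 ht2 hF2
  have hht1 : lam - Δ ≤ dist p (curveMap P t1) := by
    have h := dist_triangle p (curveMap P t1) q1
    have h2 : dist (curveMap P t1) q1 ≤ Δ := E1t
    linarith [hd1 ▸ h]
  have hs2t1 : s2 ≤ t1 := by
    by_contra hc
    push_neg at hc
    obtain ⟨u, hu0, hu1, heu, hhu⟩ := hgood1
    have hjn : j ≤ n - 1 := by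
      have := min_le_right ⌊u * (n : ℝ)⌋₊ (n - 1); omega
    set j' := min ⌊s2 * (n : ℝ)⌋₊ (n - 1) with hj'def
    have hj'le : j' ≤ j := by
      refine hmax2 j' (min_le_right _ _) ⟨s2, hs2, hst2, rfl, ?_⟩
      exact E2s
    rcases lt_or_eq_of_le hj'le with hltj | heqj
    · -- j' < j : then s2 < u ≤ t1 < s2, contradiction
      have hfloor : ⌊s2 * (n : ℝ)⌋₊ = j' := by omega
      have h1 : (j : ℝ) ≤ u * n := by
        have hju : j ≤ ⌊u * (n : ℝ)⌋₊ := by omega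
        have := Nat.floor_le (mul_nonneg hu0 (Nat.cast_nonneg n))
        calc (j : ℝ) ≤ (⌊u * (n : ℝ)⌋₊ : ℝ) := by exact_mod_cast hju
          _ ≤ u * n := this
      have h2 : s2 * n < (j' : ℝ) + 1 := by
        have := Nat.lt_floor_add_one (s2 * (n : ℝ))
        rw [hfloor] at this; exact_mod_cast this
      have h3 : (j' : ℝ) + 1 ≤ (j : ℝ) := by exact_mod_cast hltj
      have h4 : s2 * n < u * n := by linarith
      have hnpos : (0:ℝ) < n := by
        exact_mod_cast Nat.pos_of_ne_zero hn
      have : s2 < u := lt_of_mul_lt_mul_right h4 hnpos.le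
      linarith
    · -- j' = j : convexity on edge j gives dist p (curveMap P t1) ≤ Δ, contradiction
      have hjs2 : min ⌊s2 * (n : ℝ)⌋₊ (n - 1) = j := heqj ▸ hj'def.symm
      have hconv := conv_lemma P p hn (Δ := Δ) hu1 hc.le heu hjs2 hhu
        (by exact E2s)
      linarith
  obtain ⟨τ, hτ0, hτ1, hτd⟩ := E2m t1 hs2t1 ht12
  have hy1 : dist p (seg p q2 τ) = τ * lam := by rw [seg_dist_left p q2 hτ0, hd2]
  have hy2 : dist (seg p q2 τ) q2 = (1 - τ) * lam := by rw [seg_dist_right p q2 hτ1, hd2]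
  have hq1y : dist q1 (seg p q2 τ) ≤ 2 * Δ := by
    calc dist q1 (seg p q2 τ) ≤ dist q1 (curveMap P t1) + dist (curveMap P t1) (seg p q2 τ) :=
          dist_triangle _ _ _
      _ ≤ Δ + Δ := add_le_add (by rw [dist_comm]; exact E1t) hτd
      _ = 2 * Δ := by ring
  have hlow : lam ≤ τ * lam + 2 * Δ := by
    have h := dist_triangle p (seg p q2 τ) q1
    rw [hy1] at h
    have : dist (seg p q2 τ) q1 ≤ 2 * Δ := by rwa [dist_comm] at hq1y
    linarith [hd1 ▸ h]
  calc dist q1 q2 ≤ dist q1 (seg p q2 τ) + dist (seg p q2 τ) q2 := dist_triangle _ _ _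
    _ ≤ 2 * Δ + (1 - τ) * lam := by rw [hy2]; exact add_le_add hq1y (le_refl _)
    _ ≤ 4 * Δ := by nlinarith

end Aux5

/-- Lemma 3.9 of the paper. For a polygonal curve `P` of complexity at most
`k`, `λ ≥ 0`, `Δ ≥ 0` and `p ∈ ℝ^d`, the set `𝓛_{λ,Δ}(P,p)` is contained in the union of
`k` closed balls of radius `5Δ`. -/
theorem locusPoint_subset_balls (d k n : ℕ) (hn : n + 1 ≤ k) (P : Fin (n + 1) → Euc d)
    (lam Δ : ℝ) (hlam : 0 ≤ lam) (hΔ : 0 ≤ Δ) (p : Euc d) :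
    ∃ c : Fin k → Euc d, locusPoint P lam Δ p ⊆ ⋃ i, closedBall (c i) (5 * Δ) := by
  classical
  have hk : 0 < k := by omega
  rcases le_or_gt lam (2 * Δ) with hl | hl
  · -- small λ : everything is near p
    refine ⟨fun _ => p, fun q hq => ?_⟩
    refine mem_iUnion.mpr ⟨⟨0, hk⟩, ?_⟩
    rw [mem_closedBall, dist_comm, hq.1]
    linarith
  rcases Nat.eq_zero_or_pos n with hn0 | hn1
  · -- constant curve : the locus is empty
    refine ⟨fun _ => p, fun q hq => ?_⟩
    exfalso
    obtain ⟨hd, s, t, hs, hst, ht, hF⟩ := hq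
    obtain ⟨h1, h2, _⟩ := frechet_extract P p q hs hst ht hF
    have e1 : curveMap P s = P 0 := by simp [curveMap, hn0]
    have e2 : curveMap P t = P 0 := by simp [curveMap, hn0]
    rw [e1] at h1; rw [e2] at h2
    have h3 : dist p q ≤ dist p (P 0) + dist (P 0) q := dist_triangle _ _ _
    rw [hd] at h3
    linarith
  · have hne : n ≠ 0 := by omega
    set J : ℝ → ℕ := fun t => Nat.findGreatest (good P p Δ t) (n - 1) with hJ
    set R : ℕ → Euc d → Prop := fun j q => dist p q = lam ∧ ∃ s t : ℝ, 0 ≤ s ∧ s ≤ t ∧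
      t ≤ 1 ∧ frechetDist (subcurve (curveMap P) s t) (seg p q) ≤ Δ ∧ J t = j with hR
    refine ⟨fun i => if h : ∃ q, R i.1 q then h.choose else p, fun q hq => ?_⟩
    obtain ⟨hd, s, t, hs, hst, ht, hF⟩ := hq
    obtain ⟨hxs, hxt, hxm⟩ := frechet_extract P p q hs hst ht hF
    have hgood : good P p Δ t (min ⌊s * (n : ℝ)⌋₊ (n - 1)) := ⟨s, hs, hst, rfl, hxs⟩
    have hgoodJ : good P p Δ t (J t) :=
      Nat.findGreatest_spec (min_le_right _ _) hgood
    have hjk : J t < k := by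
      have hle : J t ≤ n - 1 := Nat.findGreatest_le _
      omega
    have hex : ∃ q', R (J t) q' := ⟨q, hd, s, t, hs, hst, ht, hF, rfl⟩
    refine mem_iUnion.mpr ⟨⟨J t, hjk⟩, ?_⟩
    rw [mem_closedBall]
    show dist q (if h : ∃ q', R (J t) q' then h.choose else p) ≤ 5 * Δ
    rw [dif_pos hex]
    obtain ⟨hd', s', t', hs', hst', ht', hF', hJ'⟩ := hex.choose_spec
    set q₂ := hex.choose
    -- goodness and maximality facts for both parameters
    obtain ⟨hxs', _, _⟩ := frechet_extract P p q₂ hs' hst' ht' hF'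
    have hgood' : good P p Δ t' (min ⌊s' * (n : ℝ)⌋₊ (n - 1)) := ⟨s', hs', hst', rfl, hxs'⟩
    have hgoodJ' : good P p Δ t' (J t') := Nat.findGreatest_spec (min_le_right _ _) hgood'
    rcases le_total t t' with h12 | h12
    · have hpair := pair_lemma P p hne hl hd hd' hs hst ht hs' hst' ht' hF hF' h12
        (j := J t) hgoodJ
        (fun j' hj' hg => by
          have h2 : j' ≤ J t' := Nat.le_findGreatest hj' hg
          omega)
      calc dist q q₂ ≤ 4 * Δ := hpair
        _ ≤ 5 * Δ := by linarith
    · rw [dist_comm]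
      have hpair := pair_lemma P p hne hl hd' hd hs' hst' ht' hs hst ht hF' hF h12
        (j := J t) (hJ' ▸ hgoodJ')
        (fun j' hj' hg => by
          have h2 : j' ≤ J t := Nat.le_findGreatest hj' hg
          omega)
      calc dist q₂ q ≤ 4 * Δ := hpair
        _ ≤ 5 * Δ := by linarith
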